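/- Let w = Σ_{k=1}^K c_k v_k be a mixture density on ℝ whose components v_k have finite moments of all orders, infinite support, and Jacobi matrices J_N^k ∈ ℝ^{(N+1)×(N+1)}. Let h_0, h_1, …, h_N be the monic orthogonal polynomials of w (deg h_n = n, leading coefficient 1, ⟨h_m, h_n⟩_w = 0 for m ≠ n). Then for every n ≤ N: ⟨h_n, h_n⟩_w = Σ_{k=1}^K c_k (h_n(J_N^k) e₁)ᵀ (h_n(J_N^k) e₁) and ⟨x h_n, h_n⟩_w = Σ_{k=1}^K c_k (h_n(J_N^k) e₁)ᵀ J_N^k (h_n(J_N^k) e₁), where h_n(J_N^k) is the matrix polynomial evaluation and e₁ is the first standard basis vector of ℝ^{N+1}. -/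

import Mathlib

open MeasureTheory Polynomial Matrix

/-!
For one component `v` with orthonormal polynomials `Hₙ`, the three-term recurrence says that the
truncated Jacobi matrix `J_N` acts on the coordinate vectors `e₀, …, e_N` as multiplication by `x`
acts on `H₀, …, H_N`; hence `Hₙ(J_N) e₀ = eₙ` for `n ≤ N`. Expanding a polynomial of degree `≤ N`
as `p = ∑ dᵢ Hᵢ` thus gives `p(J_N) e₀ = d`, while orthonormality gives `∫ p q v = d ⬝ d'` and,
with the recurrence, `∫ x p q v = d ⬝ J_N d'`. Both integrals are linear in the density, so the
identities for the mixture `w = ∑ cₖ vₖ` follow from those for its components.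
-/

def Polynomial.Sequence.ofNatDegree {R : Type*} [Semiring R] (H : ℕ → R[X]) (h0 : H 0 ≠ 0)
    (hdeg : ∀ n, (H n).natDegree = n) : Sequence R where
  elems' := H
  degree_eq' n := by
    have hne : H n ≠ 0 := by
      rcases n with _ | n
      · exact h0
      · exact fun hn => by simpa [hn] using hdeg (n + 1)
    rw [degree_eq_natDegree hne, hdeg]

section Jacobi

variable {F : Type*} [Field F] {a b : ℕ → F} {N : ℕ}

def jacobiEntry (a b : ℕ → F) (i j : ℕ) : F :=
  if i = j then a i else if i + 1 = j then b j else if j + 1 = i then b i else 0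

def jacobiMatrix (a b : ℕ → F) (N : ℕ) : Matrix (Fin (N + 1)) (Fin (N + 1)) F :=
  Matrix.of fun i j => jacobiEntry a b i j

/-- Since `0 - 1 = 0` in `ℕ`, the last term at `n = 0` is `C (b 0) * H 0`; together with `b 0 = 0`
this encodes the convention `H₋₁ = 0`. -/
def IsThreeTermRecurrence (H : ℕ → F[X]) (a b : ℕ → F) : Prop :=
  ∀ n, X * H n = C (b (n + 1)) * H (n + 1) + C (a n) * H n + C (b n) * H (n - 1)

lemma jacobiEntry_update_zero :
    jacobiEntry a (Function.update b 0 0) = jacobiEntry a b := by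
  ext i j
  simp only [jacobiEntry, Function.update_apply]
  split_ifs <;> first | rfl | omega

lemma isThreeTermRecurrence_update_zero {H : ℕ → F[X]}
    (hrec0 : X * H 0 = C (b 1) * H 1 + C (a 0) * H 0)
    (hrec : ∀ n, 1 ≤ n →
      X * H n = C (b (n + 1)) * H (n + 1) + C (a n) * H n + C (b n) * H (n - 1)) :
    IsThreeTermRecurrence H a (Function.update b 0 0) := by
  rintro (_ | n)
  · simp [hrec0]
  · simp [hrec (n + 1) n.succ_pos]

lemma IsThreeTermRecurrence.offDiag_succ_ne_zero {S : Sequence F}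
    (hrec : IsThreeTermRecurrence S a b) (n : ℕ) : b (n + 1) ≠ 0 := by
  intro hb
  have hdeg := congrArg natDegree (hrec n)
  rw [hb, C_0, zero_mul, zero_add, natDegree_X_mul (S.ne_zero n), S.natDegree_eq] at hdeg
  have : (C (a n) * S n + C (b n) * S (n - 1)).natDegree ≤ n :=
    natDegree_add_le_of_degree_le (natDegree_C_mul_le _ _ |>.trans (S.natDegree_eq n).le)
      (natDegree_C_mul_le _ _ |>.trans ((S.natDegree_eq _).trans_le (n.sub_le 1)))
  omega

lemma LinearMap.map_X_mul_mul_eq_jacobiEntry (L : F[X] →ₗ[F] F) {H : ℕ → F[X]}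
    (hortho : ∀ m n, L (H m * H n) = if m = n then 1 else 0) (hb0 : b 0 = 0)
    (hrec : IsThreeTermRecurrence H a b) (i j : ℕ) :
    L (X * H i * H j) = jacobiEntry a b i j := by
  rcases i with _ | i <;>
  simp only [hrec _, add_mul, ← smul_eq_C_mul, smul_mul_assoc, map_add, map_smul, hortho,
    smul_eq_mul, jacobiEntry, hb0, zero_mul, add_zero, Nat.add_sub_cancel] <;>
  split_ifs <;> first | omega | (subst_vars; ring)

lemma aeval_jacobiMatrix_mulVec_single_zero {S : Sequence F} (hS0 : S 0 = 1) (hb0 : b 0 = 0)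
    (hrec : IsThreeTermRecurrence S a b) (i : Fin (N + 1)) :
    aeval (jacobiMatrix a b N) (S i) *ᵥ Pi.single 0 1 = Pi.single i 1 := by
  suffices h : ∀ n (hn : n < N + 1),
      aeval (jacobiMatrix a b N) (S n) *ᵥ Pi.single 0 1 = Pi.single ⟨n, hn⟩ 1 from h i i.isLt
  intro n
  induction n using Nat.strong_induction_on with | _ n ih =>
  rcases n with _ | n
  · intro _
    simp only [hS0, map_one, one_mulVec]
    rfl
  · intro hn
    -- Applying `p ↦ p(J) e₀` to the recurrence gives `J eₙ = bₙ₊₁ Hₙ₊₁(J) e₀ + aₙ eₙ + bₙ eₙ₋₁`,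
    -- while column `n` of `J` is `bₙ₊₁ eₙ₊₁ + aₙ eₙ + bₙ eₙ₋₁`; then cancel `bₙ₊₁ ≠ 0`.
    have hstep := congrArg (fun p => aeval (jacobiMatrix a b N) p *ᵥ Pi.single 0 1) (hrec n)
    simp only [← smul_eq_C_mul, map_mul, map_add, map_smul, aeval_X, ← mulVec_mulVec,
      add_mulVec, smul_mulVec, ih n (by omega) (by omega), ih (n - 1) (by omega) (by omega)]
      at hstep
    generalize aeval (jacobiMatrix a b N) (S (n + 1)) *ᵥ Pi.single 0 1 = u at hstep ⊢
    ext ⟨j, hj⟩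
    apply mul_left_cancel₀ (hrec.offDiag_succ_ne_zero n)
    have hstep_j := congrFun hstep ⟨j, hj⟩
    simp only [mulVec_single_one, col_apply, jacobiMatrix, of_apply, jacobiEntry, Pi.add_apply,
      Pi.smul_apply, smul_eq_mul, Pi.single_apply, Fin.ext_iff] at hstep_j ⊢
    split_ifs at hstep_j ⊢ <;> (try subst_vars) <;>
      first
      | omega
      | linear_combination (norm := ring1) -hstep_j
      | linear_combination -hstep_j - ((show j = 0 by omega) ▸ hb0 : b j = 0)

lemma Polynomial.Sequence.exists_eq_sum_smul (S : Sequence F) {p : F[X]}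
    (hp : p.natDegree ≤ N) : ∃ d : Fin (N + 1) → F, ∑ i, d i • S i = p := by
  have hrange : Set.range (fun i : Fin (N + 1) => S i) = S '' Set.Iio (N + 1) := by
    rw [← Fin.range_val, ← Set.range_comp]
    rfl
  rw [← Submodule.mem_span_range_iff_exists_fun, hrange,
    S.span_degreeLT fun i _ => (leadingCoeff_ne_zero.mpr (S.ne_zero i)).isUnit, mem_degreeLT]
  exact degree_le_natDegree.trans_lt (by exact_mod_cast Nat.lt_succ_of_le hp)

lemma aeval_jacobiMatrix_mulVec_sum_smul {S : Sequence F} (hS0 : S 0 = 1) (hb0 : b 0 = 0)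
    (hrec : IsThreeTermRecurrence S a b) (d : Fin (N + 1) → F) :
    aeval (jacobiMatrix a b N) (∑ i, d i • S i) *ᵥ Pi.single 0 1 = d := by
  simp only [map_sum, map_smul, sum_mulVec, smul_mulVec,
    aeval_jacobiMatrix_mulVec_single_zero hS0 hb0 hrec]
  exact (pi_eq_sum_univ' d).symm

lemma LinearMap.map_mul_sum_smul_mul_sum_smul {ι A : Type*} [Fintype ι] [Ring A] [Algebra F A]
    (L : A →ₗ[F] F) (r : A) (P : ι → A) (d d' : ι → F) :
    L (r * (∑ i, d i • P i) * ∑ j, d' j • P j) = ∑ i, ∑ j, d i * d' j * L (r * P i * P j) := by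
  simp only [Finset.mul_sum, Finset.sum_mul, mul_smul_comm, smul_mul_assoc, map_sum, map_smul,
    smul_eq_mul, mul_assoc]
  rw [Finset.sum_comm]
  simp only [mul_left_comm]

variable {S : Sequence F} {L : F[X] →ₗ[F] F} {p q : F[X]}

lemma LinearMap.map_mul_eq_dotProduct_aeval_jacobiMatrix (hS0 : S 0 = 1) (hb0 : b 0 = 0)
    (hrec : IsThreeTermRecurrence S a b)
    (hortho : ∀ m n, L (S m * S n) = if m = n then 1 else 0)
    (hp : p.natDegree ≤ N) (hq : q.natDegree ≤ N) :
    L (p * q) = aeval (jacobiMatrix a b N) p *ᵥ Pi.single 0 1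
      ⬝ᵥ aeval (jacobiMatrix a b N) q *ᵥ Pi.single 0 1 := by
  obtain ⟨d, rfl⟩ := S.exists_eq_sum_smul hp
  obtain ⟨d', rfl⟩ := S.exists_eq_sum_smul hq
  rw [aeval_jacobiMatrix_mulVec_sum_smul hS0 hb0 hrec,
    aeval_jacobiMatrix_mulVec_sum_smul hS0 hb0 hrec, ← one_mul (∑ i, d i • S i),
    L.map_mul_sum_smul_mul_sum_smul]
  simp [hortho, dotProduct, Fin.val_inj]

lemma LinearMap.map_X_mul_mul_eq_dotProduct_aeval_jacobiMatrix (hS0 : S 0 = 1) (hb0 : b 0 = 0)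
    (hrec : IsThreeTermRecurrence S a b)
    (hortho : ∀ m n, L (S m * S n) = if m = n then 1 else 0)
    (hp : p.natDegree ≤ N) (hq : q.natDegree ≤ N) :
    L (X * p * q) = aeval (jacobiMatrix a b N) p *ᵥ Pi.single 0 1
      ⬝ᵥ jacobiMatrix a b N *ᵥ aeval (jacobiMatrix a b N) q *ᵥ Pi.single 0 1 := by
  obtain ⟨d, rfl⟩ := S.exists_eq_sum_smul hp
  obtain ⟨d', rfl⟩ := S.exists_eq_sum_smul hq
  rw [aeval_jacobiMatrix_mulVec_sum_smul hS0 hb0 hrec,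
    aeval_jacobiMatrix_mulVec_sum_smul hS0 hb0 hrec, L.map_mul_sum_smul_mul_sum_smul]
  simp only [L.map_X_mul_mul_eq_jacobiEntry hortho hb0 hrec, dotProduct, mulVec, Finset.mul_sum,
    jacobiMatrix, of_apply]
  exact Finset.sum_congr rfl fun i _ => Finset.sum_congr rfl fun j _ => by ring

end Jacobi

section Moments

variable {v : ℝ → ℝ}

lemma integrable_eval_mul_of_integrable_abs_pow_mul
    (hv : ∀ n : ℕ, Integrable (fun x => |x| ^ n * v x)) (p : ℝ[X]) :
    Integrable (fun x => p.eval x * v x) := by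
  have hmeas : AEStronglyMeasurable v := by simpa using (hv 0).aestronglyMeasurable
  have hpow (n : ℕ) : Integrable (fun x => x ^ n * v x) :=
    (hv n).norm.mono' ((continuous_pow n).aestronglyMeasurable.mul hmeas)
      (ae_of_all _ fun x => by simp)
  simp_rw [eval_eq_sum_range, Finset.sum_mul]
  exact integrable_finsetSum _ fun i _ => by simpa [mul_assoc] using (hpow i).const_mul (p.coeff i)

noncomputable def momentFunctional (v : ℝ → ℝ)
    (hv : ∀ n : ℕ, Integrable (fun x => |x| ^ n * v x)) : ℝ[X] →ₗ[ℝ] ℝ where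
  toFun p := ∫ x, p.eval x * v x
  map_add' p q := by
    simp only [eval_add, add_mul]
    exact integral_add (integrable_eval_mul_of_integrable_abs_pow_mul hv p)
      (integrable_eval_mul_of_integrable_abs_pow_mul hv q)
  map_smul' r p := by
    simp only [eval_smul, smul_eq_mul, mul_assoc, RingHom.id_apply]
    exact integral_const_mul r _

variable (hv : ∀ n : ℕ, Integrable (fun x => |x| ^ n * v x))

lemma momentFunctional_mul (p q : ℝ[X]) :
    momentFunctional v hv (p * q) = ∫ x, p.eval x * q.eval x * v x := by
  simp [momentFunctional]

lemma momentFunctional_X_mul_mul (p q : ℝ[X]) :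
    momentFunctional v hv (X * p * q) = ∫ x, x * p.eval x * q.eval x * v x := by
  simp [momentFunctional]

end Moments

lemma integral_mul_sum_mul {α ι : Type*} [MeasurableSpace α] {μ : Measure α} (s : Finset ι)
    (c : ι → ℝ) (v : ι → α → ℝ) (f : α → ℝ) (hf : ∀ k ∈ s, Integrable (fun x => f x * v k x) μ) :
    ∫ x, f x * ∑ k ∈ s, c k * v k x ∂μ = ∑ k ∈ s, c k * ∫ x, f x * v k x ∂μ := by
  simp_rw [Finset.mul_sum, mul_left_comm (f _)]
  rw [integral_finsetSum _ fun k hk => (hf k hk).const_mul (c k)]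
  simp_rw [integral_const_mul]

theorem mixture_monic_inner_products_via_jacobi_general
    (K N : ℕ) (c : Fin K → ℝ) (v : Fin K → ℝ → ℝ)
    (hv_mom : ∀ k (n : ℕ), Integrable (fun x : ℝ => |x| ^ n * v k x))
    (w : ℝ → ℝ) (hw : ∀ x, w x = ∑ k, c k * v k x)
    -- orthonormal polynomial bases of the components, with their recurrences
    (Hk : Fin K → ℕ → Polynomial ℝ)
    (hHk0 : ∀ k, Hk k 0 = 1)
    (hHkdeg : ∀ k n, (Hk k n).natDegree = n)
    (hHkortho : ∀ k m n, ∫ x : ℝ, (Hk k m).eval x * (Hk k n).eval x * v k x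
      = if m = n then 1 else 0)
    (ak bk : Fin K → ℕ → ℝ)
    (hHkrec0 : ∀ k, X * Hk k 0 = C (bk k 1) * Hk k 1 + C (ak k 0) * Hk k 0)
    (hHkrec : ∀ k n, 1 ≤ n → X * Hk k n
      = C (bk k (n + 1)) * Hk k (n + 1) + C (ak k n) * Hk k n
        + C (bk k n) * Hk k (n - 1))
    -- the Jacobi matrices of the components
    (J : Fin K → Matrix (Fin (N + 1)) (Fin (N + 1)) ℝ)
    (hJ : ∀ k (i j : Fin (N + 1)), J k i j =
      if (i : ℕ) = (j : ℕ) then ak k i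
      else if (i : ℕ) + 1 = (j : ℕ) then bk k j
      else if (j : ℕ) + 1 = (i : ℕ) then bk k i
      else 0)
    -- the monic orthogonal polynomials of the mixture
    (h : ℕ → Polynomial ℝ)
    (hdeg : ∀ n, n ≤ N → (h n).natDegree = n) :
    ∀ n, n ≤ N →
      (∫ x : ℝ, (h n).eval x * (h n).eval x * w x)
        = ∑ k, c k * ((Polynomial.aeval (J k) (h n)).mulVec (Pi.single 0 1)
            ⬝ᵥ (Polynomial.aeval (J k) (h n)).mulVec (Pi.single 0 1)) ∧
      (∫ x : ℝ, (x * (h n).eval x) * (h n).eval x * w x)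
        = ∑ k, c k * ((Polynomial.aeval (J k) (h n)).mulVec (Pi.single 0 1)
            ⬝ᵥ (J k).mulVec
              ((Polynomial.aeval (J k) (h n)).mulVec (Pi.single 0 1))) := by
  intro n hn
  have hn' : (h n).natDegree ≤ N := (hdeg n hn).trans_le hn
  let S k := Sequence.ofNatDegree (Hk k) (by simp [hHk0]) (hHkdeg k)
  -- Resetting `bₖ 0` to `0` merges the two recurrences and leaves `J k` unchanged.
  have hrec k := isThreeTermRecurrence_update_zero (hHkrec0 k) (hHkrec k)
  have hortho k m n := (momentFunctional_mul (hv_mom k) (S k m) (S k n)).trans (hHkortho k m n)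
  have hJ' k : J k = jacobiMatrix (ak k) (Function.update (bk k) 0 0) N := by
    ext i j
    rw [hJ, jacobiMatrix, jacobiEntry_update_zero]
    rfl
  have hint₁ k : Integrable (fun x => (h n).eval x * (h n).eval x * v k x) := by
    simpa only [eval_mul] using integrable_eval_mul_of_integrable_abs_pow_mul (hv_mom k) (h n * h n)
  have hint₂ k : Integrable (fun x => x * (h n).eval x * (h n).eval x * v k x) := by
    have := integrable_eval_mul_of_integrable_abs_pow_mul (hv_mom k) (X * h n * h n)
    simpa only [eval_mul, eval_X] using this
  simp only [hw]
  constructor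
  · rw [integral_mul_sum_mul _ _ _ _ fun k _ => hint₁ k]
    refine Finset.sum_congr rfl fun k _ => ?_
    rw [← momentFunctional_mul (hv_mom k), hJ', LinearMap.map_mul_eq_dotProduct_aeval_jacobiMatrix
      (S := S k) (hHk0 k) rfl (hrec k) (hortho k) hn' hn']
  · rw [integral_mul_sum_mul _ _ _ _ fun k _ => hint₂ k]
    refine Finset.sum_congr rfl fun k _ => ?_
    rw [← momentFunctional_X_mul_mul (hv_mom k), hJ',
      LinearMap.map_X_mul_mul_eq_dotProduct_aeval_jacobiMatrix
        (S := S k) (hHk0 k) rfl (hrec k) (hortho k) hn' hn']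

/-- For a mixture density `w = ∑ c_k v_k` whose components have
finite moments, infinite support, and Jacobi matrices `J^k`, and for the monic
orthogonal polynomials `h_0, …, h_N` of `w`, one has for every `n ≤ N`:
`⟨h_n, h_n⟩_w = ∑_k c_k (h_n(J^k) e₁)ᵀ (h_n(J^k) e₁)` and
`⟨x h_n, h_n⟩_w = ∑_k c_k (h_n(J^k) e₁)ᵀ J^k (h_n(J^k) e₁)`. -/
theorem mixture_monic_inner_products_via_jacobi
    (K N : ℕ) (hK : 0 < K)
    (c : Fin K → ℝ) (hc_pos : ∀ k, 0 < c k) (hc_sum : ∑ k, c k = 1)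
    (v : Fin K → ℝ → ℝ) (hv_meas : ∀ k, Measurable (v k))
    (hv_nonneg : ∀ k x, 0 ≤ v k x) (hv_prob : ∀ k, ∫ x : ℝ, v k x = 1)
    (hv_mom : ∀ k (n : ℕ), Integrable (fun x : ℝ => |x| ^ n * v k x))
    (hv_supp : ∀ k, {x : ℝ | v k x ≠ 0}.Infinite)
    (w : ℝ → ℝ) (hw : ∀ x, w x = ∑ k, c k * v k x)
    -- orthonormal polynomial bases of the components, with their recurrences
    (Hk : Fin K → ℕ → Polynomial ℝ)
    (hHk0 : ∀ k, Hk k 0 = 1)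
    (hHkdeg : ∀ k n, (Hk k n).natDegree = n)
    (hHkortho : ∀ k m n, ∫ x : ℝ, (Hk k m).eval x * (Hk k n).eval x * v k x
      = if m = n then 1 else 0)
    (ak bk : Fin K → ℕ → ℝ)
    (hHkrec0 : ∀ k, X * Hk k 0 = C (bk k 1) * Hk k 1 + C (ak k 0) * Hk k 0)
    (hHkrec : ∀ k n, 1 ≤ n → X * Hk k n
      = C (bk k (n + 1)) * Hk k (n + 1) + C (ak k n) * Hk k n
        + C (bk k n) * Hk k (n - 1))
    -- the Jacobi matrices of the components
    (J : Fin K → Matrix (Fin (N + 1)) (Fin (N + 1)) ℝ)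
    (hJ : ∀ k (i j : Fin (N + 1)), J k i j =
      if (i : ℕ) = (j : ℕ) then ak k i
      else if (i : ℕ) + 1 = (j : ℕ) then bk k j
      else if (j : ℕ) + 1 = (i : ℕ) then bk k i
      else 0)
    -- the monic orthogonal polynomials of the mixture
    (h : ℕ → Polynomial ℝ)
    (hmonic : ∀ n, n ≤ N → (h n).Monic)
    (hdeg : ∀ n, n ≤ N → (h n).natDegree = n)
    (hortho : ∀ m n, m ≤ N → n ≤ N → m ≠ n →
      ∫ x : ℝ, (h m).eval x * (h n).eval x * w x = 0) :
    ∀ n, n ≤ N →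
      (∫ x : ℝ, (h n).eval x * (h n).eval x * w x)
        = ∑ k, c k * ((Polynomial.aeval (J k) (h n)).mulVec (Pi.single 0 1)
            ⬝ᵥ (Polynomial.aeval (J k) (h n)).mulVec (Pi.single 0 1)) ∧
      (∫ x : ℝ, (x * (h n).eval x) * (h n).eval x * w x)
        = ∑ k, c k * ((Polynomial.aeval (J k) (h n)).mulVec (Pi.single 0 1)
            ⬝ᵥ (J k).mulVec
              ((Polynomial.aeval (J k) (h n)).mulVec (Pi.single 0 1))) :=
  mixture_monic_inner_products_via_jacobi_general K N c v hv_mom w hw Hk hHk0 hHkdeg hHkortho ak bk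
    hHkrec0 hHkrec J hJ h hdeg
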